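/- No unitarily invariant distance on quantum states can be super-additive with strict improvement under local change while the states remain orthogonal: concretely, for the 3-qubit states ρ₀ = |000⟩⟨000|, ρ₁ = |GHZ₂⟩⟨GHZ₂| ⊗ |0⟩⟨0|, and target τ = |GHZ₂⟩⟨GHZ₂| ⊗ |1⟩⟨1|, any distance D that is invariant under joint unitary conjugation and depends only on the pair of states satisfies D(ρ₀, τ) = D(ρ₁, τ), whereas D_{EM}(ρ₁, τ) = 1 < D_{EM}(ρ₀, τ). -/

import Mathlib

open scoped BigOperators ComplexOrder

/-- Matrices acting on `n` qubits. -/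
abbrev QMat (n : ℕ) := Matrix (Fin n → Fin 2) (Fin n → Fin 2) ℂ

/-- The trace norm (sum of the absolute values of the eigenvalues) of a Hermitian matrix. -/
noncomputable def traceNorm {n : ℕ} (X : QMat n) : ℝ :=
  if h : X.IsHermitian then ∑ i, |h.eigenvalues i| else 0

/-- The partial trace of `X` over qubit `i` vanishes. -/
def ptraceZero {n : ℕ} (i : Fin n) (X : QMat n) : Prop :=
  ∀ a b : Fin n → Fin 2,
    ∑ v : Fin 2, X (Function.update a i v) (Function.update b i v) = 0

/-- The quantum Wasserstein-1 (earth mover's) norm, primal formulation: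
`‖X‖_EM = (1/2) min { Σᵢ ‖Xᵢ‖₁ : Xᵢ Hermitian, Trᵢ Xᵢ = 0, Σᵢ Xᵢ = X }`. -/
noncomputable def emNorm {n : ℕ} (X : QMat n) : ℝ :=
  (1 / 2) * sInf { r | ∃ Xs : Fin n → QMat n,
    (∀ i, (Xs i).IsHermitian) ∧ (∀ i, ptraceZero i (Xs i)) ∧
    (∑ i, Xs i) = X ∧ r = ∑ i, traceNorm (Xs i) }

/-- The quantum Wasserstein-1 (earth mover's) distance. -/
noncomputable def emDist {n : ℕ} (ρ σ : QMat n) : ℝ := emNorm (ρ - σ)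

/-- A density matrix: positive semidefinite with unit trace. -/
def IsState {n : ℕ} (ρ : QMat n) : Prop := ρ.PosSemidef ∧ ρ.trace = 1

/-- The density matrix `|v⟩⟨v|` of a pure state with amplitudes `v`. -/
noncomputable def outer {n : ℕ} (v : (Fin n → Fin 2) → ℂ) : QMat n :=
  Matrix.vecMulVec v (star v)

/-- Amplitudes of `|000⟩`. -/
noncomputable def v000 : (Fin 3 → Fin 2) → ℂ := fun u =>
  if u = ![0, 0, 0] then 1 else 0

/-- Amplitudes of `|GHZ₂⟩ ⊗ |0⟩ = (|000⟩ + |110⟩)/√2`. -/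
noncomputable def vGHZ0 : (Fin 3 → Fin 2) → ℂ := fun u =>
  if u = ![0, 0, 0] ∨ u = ![1, 1, 0] then ((Real.sqrt 2)⁻¹ : ℂ) else 0

/-- Amplitudes of the target `|GHZ₂⟩ ⊗ |1⟩ = (|001⟩ + |111⟩)/√2`. -/
noncomputable def vTar : (Fin 3 → Fin 2) → ℂ := fun u =>
  if u = ![0, 0, 1] ∨ u = ![1, 1, 1] then ((Real.sqrt 2)⁻¹ : ℂ) else 0

/-!
The first claim needs a single unitary: the Householder reflection in the hyperplane orthogonal
to `|000⟩ - |GHZ₂⟩|0⟩` exchanges these two unit vectors (their overlap `1/√2` is real) and fixes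
the target, which is orthogonal to both.

For the EM distance, test an admissible decomposition `X = Σᵢ Xᵢ` (`Xᵢ` Hermitian with vanishing
partial trace over qubit `i`) against the diagonal observable `H` = Hamming weight. Because
`Trᵢ Xᵢ = 0`, `Tr (H Xᵢ) = Tr ((H - Hᵢ) Xᵢ)` where `Hᵢ` averages `H` over qubit `i`, and
`‖H - Hᵢ‖∞ ≤ 1/2`; hence `|Tr (H X)| ≤ ½ Σᵢ ‖Xᵢ‖₁`. Since `Tr (H (ρ₁ - τ)) = -1` and
`Tr (H (ρ₀ - τ)) = -2`, the EM distances are at least `1` and `2`, and `ρ₁ - τ` is itself an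
admissible piece on qubit `2`, of trace norm `2`.
-/

open Matrix

namespace Matrix.IsHermitian

variable {ι : Type*} [Fintype ι] [DecidableEq ι] {X : Matrix ι ι ℂ}

lemma apply_self_eq_sum_eigenvalues (hX : X.IsHermitian) (u : ι) :
    X u u = ∑ j, (hX.eigenvalues j : ℂ) * Complex.normSq (hX.eigenvectorBasis j u) := by
  conv_lhs => rw [hX.spectral_theorem, Unitary.conjStarAlgAut_apply, mul_apply]
  simp only [mul_diagonal, star_apply, eigenvectorUnitary_apply, Function.comp_apply,
    RCLike.star_def, Complex.normSq_eq_conj_mul_self]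
  refine Finset.sum_congr rfl fun j _ => ?_
  simp only [RCLike.ofReal_alg, Complex.real_smul, mul_one]
  ring

lemma sum_normSq_eigenvectorBasis (hX : X.IsHermitian) (j : ι) :
    ∑ u, Complex.normSq (hX.eigenvectorBasis j u) = 1 := by
  have h := hX.eigenvectorBasis.orthonormal.1 j
  rw [EuclideanSpace.norm_eq, Real.sqrt_eq_one] at h
  simpa [Complex.normSq_eq_norm_sq] using h

lemma trace_mul_self_eq_sum_sq_eigenvalues (hX : X.IsHermitian) :
    (X * X).trace = ∑ j, ((hX.eigenvalues j ^ 2 : ℝ) : ℂ) := by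
  conv_lhs => rw [hX.spectral_theorem, ← map_mul, Unitary.conjStarAlgAut_apply, trace_mul_cycle,
    Unitary.coe_star_mul_self, one_mul, diagonal_mul_diagonal, trace_diagonal]
  simp [sq]

lemma eigenvalues_pow_three_eq_self (hX : X.IsHermitian) (h3 : X * X * X = X) (j : ι) :
    hX.eigenvalues j ^ 3 = hX.eigenvalues j := by
  have hne : (⇑(hX.eigenvectorBasis j) : ι → ℂ) ≠ 0 := by
    simpa using hX.eigenvectorBasis.orthonormal.ne_zero j
  have he := hX.mulVec_eigenvectorBasis j
  generalize ⇑(hX.eigenvectorBasis j) = e at he hne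
  refine smul_left_injective ℝ hne ?_
  calc hX.eigenvalues j ^ 3 • e = (X * X * X) *ᵥ e := by
        simp only [← mulVec_mulVec, he, mulVec_smul, smul_smul]
        ring_nf
    _ = hX.eigenvalues j • e := by rw [h3, he]

end Matrix.IsHermitian

section TraceNorm

variable {n : ℕ}

lemma traceNorm_nonneg (X : QMat n) : 0 ≤ traceNorm X := by
  unfold traceNorm
  split_ifs
  · positivity
  · rfl

lemma norm_sum_mul_diag_le_traceNorm {X : QMat n} (hX : X.IsHermitian)
    (w : (Fin n → Fin 2) → ℂ) {c : ℝ} (hw : ∀ u, ‖w u‖ ≤ c) :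
    ‖∑ u, w u * X u u‖ ≤ c * traceNorm X := by
  have hweight : ∀ j, ‖∑ u, w u * Complex.normSq (hX.eigenvectorBasis j u)‖ ≤ c := fun j =>
    calc ‖∑ u, w u * Complex.normSq (hX.eigenvectorBasis j u)‖
        ≤ ∑ u, ‖w u‖ * Complex.normSq (hX.eigenvectorBasis j u) := by
          refine (norm_sum_le _ _).trans_eq (Finset.sum_congr rfl fun u _ => ?_)
          rw [norm_mul, Complex.norm_real, Real.norm_of_nonneg (Complex.normSq_nonneg _)]
      _ ≤ ∑ u, c * Complex.normSq (hX.eigenvectorBasis j u) :=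
          Finset.sum_le_sum fun u _ => mul_le_mul_of_nonneg_right (hw u) (Complex.normSq_nonneg _)
      _ = c := by rw [← Finset.mul_sum, hX.sum_normSq_eigenvectorBasis, mul_one]
  have hswap : ∑ u, w u * X u u =
      ∑ j, (hX.eigenvalues j : ℂ) * ∑ u, w u * Complex.normSq (hX.eigenvectorBasis j u) := by
    simp only [hX.apply_self_eq_sum_eigenvalues, Finset.mul_sum]
    rw [Finset.sum_comm]
    exact Finset.sum_congr rfl fun j _ => Finset.sum_congr rfl fun u _ => by ring
  calc ‖∑ u, w u * X u u‖
      ≤ ∑ j, |hX.eigenvalues j| * c := by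
        rw [hswap]
        refine (norm_sum_le _ _).trans (Finset.sum_le_sum fun j _ => ?_)
        rw [norm_mul, Complex.norm_real, Real.norm_eq_abs]
        exact mul_le_mul_of_nonneg_left (hweight j) (abs_nonneg _)
    _ = c * traceNorm X := by rw [traceNorm, dif_pos hX, ← Finset.sum_mul, mul_comm]

lemma traceNorm_eq_re_trace_mul_self {X : QMat n} (hX : X.IsHermitian) (h3 : X * X * X = X) :
    traceNorm X = (X * X).trace.re := by
  rw [traceNorm, dif_pos hX, hX.trace_mul_self_eq_sum_sq_eigenvalues, ← Complex.ofReal_sum,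
    Complex.ofReal_re]
  refine Finset.sum_congr rfl fun j _ => ?_
  have hroots : hX.eigenvalues j * (hX.eigenvalues j - 1) * (hX.eigenvalues j + 1) = 0 := by
    linear_combination hX.eigenvalues_pow_three_eq_self h3 j
  rcases mul_eq_zero.1 hroots with h | h
  · rcases mul_eq_zero.1 h with h | h
    · simp [h]
    · simp [sub_eq_zero.1 h]
  · simp [eq_neg_of_add_eq_zero_left h]

lemma traceNorm_zero : traceNorm (0 : QMat n) = 0 := by
  simp [traceNorm_eq_re_trace_mul_self isHermitian_zero (by simp)]

end TraceNorm

section PureStates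

variable {n : ℕ}

lemma outer_isHermitian (v : (Fin n → Fin 2) → ℂ) : (outer v).IsHermitian := by
  rw [IsHermitian, outer, conjTranspose_vecMulVec, star_star]

lemma outer_mul_outer (v w : (Fin n → Fin 2) → ℂ) :
    outer v * outer w = (star v ⬝ᵥ w) • vecMulVec v (star w) := by
  rw [outer, outer, vecMulVec_mul_vecMulVec, vecMulVec_smul]

lemma trace_outer (v : (Fin n → Fin 2) → ℂ) : (outer v).trace = star v ⬝ᵥ v := by
  rw [outer, trace_vecMulVec, dotProduct_comm]

lemma mul_outer_mul_conjTranspose (U : QMat n) (v : (Fin n → Fin 2) → ℂ) :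
    U * outer v * Uᴴ = outer (U *ᵥ v) := by
  rw [outer, outer, mul_vecMulVec, vecMulVec_mul, star_mulVec]

lemma traceNorm_outer_sub_outer {v w : (Fin n → Fin 2) → ℂ} (hv : star v ⬝ᵥ v = 1)
    (hw : star w ⬝ᵥ w = 1) (hvw : star v ⬝ᵥ w = 0) : traceNorm (outer v - outer w) = 2 := by
  have hwv : star w ⬝ᵥ v = 0 := by rw [star_dotProduct, hvw, star_zero]
  have hPv : outer v * outer v = outer v := by rw [outer_mul_outer, hv, one_smul]; rfl
  have hPw : outer w * outer w = outer w := by rw [outer_mul_outer, hw, one_smul]; rfl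
  have hPvw : outer v * outer w = 0 := by rw [outer_mul_outer, hvw, zero_smul]
  have hPwv : outer w * outer v = 0 := by rw [outer_mul_outer, hwv, zero_smul]
  have hsq : (outer v - outer w) * (outer v - outer w) = outer v + outer w := by
    simp only [sub_mul, mul_sub, hPv, hPw, hPvw, hPwv]
    abel
  have hcube : (outer v - outer w) * (outer v - outer w) * (outer v - outer w) =
      outer v - outer w := by
    simp only [hsq, add_mul, mul_sub, hPv, hPw, hPvw, hPwv]
    abel
  rw [traceNorm_eq_re_trace_mul_self ((outer_isHermitian v).sub (outer_isHermitian w)) hcube,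
    hsq, trace_add, trace_outer, trace_outer, hv, hw]
  norm_num

end PureStates

section Householder

variable {ι : Type*} [Fintype ι] [DecidableEq ι]

/-- The reflection in the hyperplane orthogonal to `d`; for `d = 0` the junk value `2 / 0 = 0`
makes it the identity. -/
noncomputable def householder (d : ι → ℂ) : Matrix ι ι ℂ :=
  1 - (2 / (star d ⬝ᵥ d)) • vecMulVec d (star d)

lemma householder_mem_unitaryGroup (d : ι → ℂ) : householder d ∈ unitaryGroup ι ℂ := by
  have hreal : star (star d ⬝ᵥ d) = star d ⬝ᵥ d := by rw [← star_dotProduct]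
  have hself : star (householder d) = householder d := by
    rw [householder, star_eq_conjTranspose, conjTranspose_sub, conjTranspose_one,
      conjTranspose_smul, conjTranspose_vecMulVec, star_star, star_div₀, hreal, star_ofNat]
  have hsq : vecMulVec d (star d) * vecMulVec d (star d) =
      (star d ⬝ᵥ d) • vecMulVec d (star d) := by
    rw [vecMulVec_mul_vecMulVec, vecMulVec_smul]
  have hcoef : 2 / (star d ⬝ᵥ d) * (2 / (star d ⬝ᵥ d)) * (star d ⬝ᵥ d) =
      2 * (2 / (star d ⬝ᵥ d)) := by
    by_cases h0 : star d ⬝ᵥ d = 0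
    · simp [h0]
    · field_simp
  rw [mem_unitaryGroup_iff, hself, householder]
  simp only [sub_mul, mul_sub, one_mul, mul_one, smul_mul_smul_comm, hsq, smul_smul, hcoef]
  module

lemma householder_mulVec_of_dotProduct_eq_zero {d x : ι → ℂ} (h : star d ⬝ᵥ x = 0) :
    householder d *ᵥ x = x := by
  rw [householder, sub_mulVec, one_mulVec, smul_mulVec, vecMulVec_mulVec, h]
  simp

lemma householder_sub_mulVec {v w : ι → ℂ} (hnorm : star v ⬝ᵥ v = star w ⬝ᵥ w)
    (hreal : star v ⬝ᵥ w = star w ⬝ᵥ v) : householder (v - w) *ᵥ v = w := by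
  have hdd : star (v - w) ⬝ᵥ (v - w) = 2 * (star (v - w) ⬝ᵥ v) := by
    simp only [star_sub, sub_dotProduct, dotProduct_sub]
    linear_combination -hnorm - hreal
  by_cases h0 : star (v - w) ⬝ᵥ v = 0
  · rw [h0, mul_zero, dotProduct_star_self_eq_zero, sub_eq_zero] at hdd
    subst hdd
    simp [householder]
  · rw [householder, sub_mulVec, one_mulVec, smul_mulVec, vecMulVec_mulVec, hdd,
      op_smul_eq_smul, smul_smul, div_mul_cancel_left₀ two_ne_zero, inv_mul_cancel₀ h0, one_smul,
      sub_sub_cancel]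

end Householder

theorem apply_outer_eq_of_unitary_invariant {n : ℕ} {D : QMat n → QMat n → ℝ}
    (hD : ∀ U : QMat n, U ∈ unitaryGroup (Fin n → Fin 2) ℂ →
      ∀ ρ σ : QMat n, D (U * ρ * Uᴴ) (U * σ * Uᴴ) = D ρ σ)
    {v w x : (Fin n → Fin 2) → ℂ} (hnorm : star v ⬝ᵥ v = star w ⬝ᵥ w)
    (hreal : star v ⬝ᵥ w = star w ⬝ᵥ v) (hvx : star v ⬝ᵥ x = 0) (hwx : star w ⬝ᵥ x = 0) :
    D (outer v) (outer x) = D (outer w) (outer x) := by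
  have hx : householder (v - w) *ᵥ x = x := householder_mulVec_of_dotProduct_eq_zero <| by
    rw [star_sub, sub_dotProduct, hvx, hwx, sub_zero]
  have h := hD _ (householder_mem_unitaryGroup (v - w)) (outer v) (outer x)
  rwa [mul_outer_mul_conjTranspose, mul_outer_mul_conjTranspose, householder_sub_mulVec hnorm hreal,
    hx, eq_comm] at h

section EarthMover

variable {n : ℕ}

def IsEMDecomposition (X : QMat n) (Xs : Fin n → QMat n) : Prop :=
  (∀ i, (Xs i).IsHermitian) ∧ (∀ i, ptraceZero i (Xs i)) ∧ ∑ i, Xs i = X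

lemma ptraceZero_zero (i : Fin n) : ptraceZero i 0 := fun a b => by simp

lemma ptraceZero_iff_insertNth (i : Fin (n + 1)) (X : QMat (n + 1)) :
    ptraceZero i X ↔ ∀ a b : Fin n → Fin 2, ∑ v, X (i.insertNth v a) (i.insertNth v b) = 0 := by
  refine ⟨fun h a b => ?_, fun h a b => ?_⟩
  · simpa using h (i.insertNth 0 a) (i.insertNth 0 b)
  · simpa using h (i.removeNth a) (i.removeNth b)

lemma sum_mul_diag_eq_zero_of_ptraceZero {i : Fin n} {Y : QMat n} (hY : ptraceZero i Y)
    {g : (Fin n → Fin 2) → ℂ} (hg : ∀ u b, g (Function.update u i b) = g u) :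
    ∑ u, g u * Y u u = 0 := by
  let toggle : (Fin n → Fin 2) → (Fin n → Fin 2) := fun u => Function.update u i (u i + 1)
  have htoggle : ∀ u, toggle u ≠ u := fun u h => by
    have := congrFun h i
    simp [toggle] at this
  have hpair : ∀ u, Y u u + Y (toggle u) (toggle u) = 0 := fun u => by
    have h := hY u u
    rw [Fin.sum_univ_two] at h
    obtain hu | hu : u i = 0 ∨ u i = 1 := by omega
    · rw [← hu, Function.update_eq_self] at h
      simpa [toggle, hu] using h
    · rw [← hu, Function.update_eq_self, add_comm] at h
      simpa [toggle, hu] using h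
  refine Finset.sum_ninvolution toggle (fun u => ?_) (fun u _ => htoggle u)
    (fun _ => Finset.mem_univ _) (fun u => ?_)
  · rw [hg, ← mul_add, hpair, mul_zero]
  · simp [toggle, add_assoc]

lemma norm_sum_mul_diag_le_of_ptraceZero {i : Fin n} {Y : QMat n} (hY : Y.IsHermitian)
    (hpt : ptraceZero i Y) {f : (Fin n → Fin 2) → ℝ}
    (hf : ∀ u b, |f (Function.update u i b) - f u| ≤ 1) :
    ‖∑ u, (f u : ℂ) * Y u u‖ ≤ traceNorm Y / 2 := by
  let avg : (Fin n → Fin 2) → ℝ := fun u =>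
    (f (Function.update u i 0) + f (Function.update u i 1)) / 2
  have havg : ∑ u, (avg u : ℂ) * Y u u = 0 :=
    sum_mul_diag_eq_zero_of_ptraceZero hpt fun u b => by simp [avg]
  have hdev : ∀ u, ‖((f u - avg u : ℝ) : ℂ)‖ ≤ 1 / 2 := fun u => by
    rw [Complex.norm_real, Real.norm_eq_abs]
    have hself : f (Function.update u i (u i)) = f u := by rw [Function.update_eq_self]
    obtain ⟨h0, h0'⟩ := abs_le.1 (hf u 0)
    obtain ⟨h1, h1'⟩ := abs_le.1 (hf u 1)
    dsimp only [avg]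
    rw [abs_le]
    obtain hu | hu : u i = 0 ∨ u i = 1 := by omega
    all_goals rw [hu] at hself; constructor <;> linarith
  calc ‖∑ u, (f u : ℂ) * Y u u‖ = ‖∑ u, ((f u - avg u : ℝ) : ℂ) * Y u u‖ := by
        simp only [Complex.ofReal_sub, sub_mul, Finset.sum_sub_distrib, havg, sub_zero]
    _ ≤ 1 / 2 * traceNorm Y := norm_sum_mul_diag_le_traceNorm hY _ hdev
    _ = traceNorm Y / 2 := by ring

lemma hammingDist_update_le_one (u : Fin n → Fin 2) (i : Fin n) (b : Fin 2) :
    hammingDist (Function.update u i b) u ≤ 1 := by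
  have hsupp : ∀ j, Function.update u i b j ≠ u j → j = i := fun j h =>
    by_contra fun hji => h (Function.update_of_ne hji _ _)
  refine Finset.card_le_one.2 fun j hj k hk => ?_
  simp only [Finset.mem_filter, Finset.mem_univ, true_and] at hj hk
  exact (hsupp j hj).trans (hsupp k hk).symm

lemma abs_hammingNorm_sub_hammingNorm_le (u v : Fin n → Fin 2) :
    |(hammingNorm u : ℝ) - hammingNorm v| ≤ hammingDist u v := by
  have huv : (hammingNorm u : ℝ) ≤ hammingDist u v + hammingNorm v := by
    exact_mod_cast hammingDist_zero_right u ▸ hammingDist_zero_right v ▸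
      hammingDist_triangle u v 0
  have hvu : (hammingNorm v : ℝ) ≤ hammingDist u v + hammingNorm u := by
    exact_mod_cast hammingDist_zero_right u ▸ hammingDist_zero_right v ▸ hammingDist_comm v u ▸
      hammingDist_triangle v u 0
  rw [abs_sub_le_iff]
  constructor <;> linarith

lemma emNorm_le_of_isEMDecomposition {X : QMat n} {Xs : Fin n → QMat n}
    (h : IsEMDecomposition X Xs) : emNorm X ≤ (∑ i, traceNorm (Xs i)) / 2 := by
  have hbdd : BddBelow {r | ∃ Xs : Fin n → QMat n, (∀ i, (Xs i).IsHermitian) ∧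
      (∀ i, ptraceZero i (Xs i)) ∧ (∑ i, Xs i) = X ∧ r = ∑ i, traceNorm (Xs i)} := by
    refine ⟨0, ?_⟩
    rintro r ⟨Xs, -, -, -, rfl⟩
    exact Finset.sum_nonneg fun i _ => traceNorm_nonneg _
  rw [emNorm, one_div_mul_eq_div]
  gcongr
  exact csInf_le hbdd ⟨Xs, h.1, h.2.1, h.2.2, rfl⟩

lemma norm_sum_mul_diag_le_emNorm {X : QMat n} (hX : ∃ Xs, IsEMDecomposition X Xs)
    {f : (Fin n → Fin 2) → ℝ} (hf : ∀ u v, |f u - f v| ≤ hammingDist u v) :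
    ‖∑ u, (f u : ℂ) * X u u‖ ≤ emNorm X := by
  obtain ⟨Xs₀, h₀⟩ := hX
  have hlocal : ∀ i u b, |f (Function.update u i b) - f u| ≤ 1 := fun i u b =>
    (hf _ _).trans (by exact_mod_cast hammingDist_update_le_one u i b)
  suffices h : 2 * ‖∑ u, (f u : ℂ) * X u u‖ ≤ sInf {r | ∃ Xs : Fin n → QMat n,
      (∀ i, (Xs i).IsHermitian) ∧ (∀ i, ptraceZero i (Xs i)) ∧ (∑ i, Xs i) = X ∧
      r = ∑ i, traceNorm (Xs i)} by
    rw [emNorm]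
    linarith
  refine le_csInf ⟨_, Xs₀, h₀.1, h₀.2.1, h₀.2.2, rfl⟩ ?_
  rintro r ⟨Xs, hherm, hpt, rfl, rfl⟩
  calc 2 * ‖∑ u, (f u : ℂ) * (∑ i, Xs i) u u‖ = 2 * ‖∑ i, ∑ u, (f u : ℂ) * Xs i u u‖ := by
        simp only [Matrix.sum_apply, Finset.mul_sum]
        rw [Finset.sum_comm]
    _ ≤ 2 * ∑ i, traceNorm (Xs i) / 2 := by
        gcongr
        exact (norm_sum_le _ _).trans <| Finset.sum_le_sum fun i _ =>
          norm_sum_mul_diag_le_of_ptraceZero (hherm i) (hpt i) (hlocal i)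
    _ = ∑ i, traceNorm (Xs i) := by rw [← Finset.sum_div]; ring

end EarthMover

section ThreeQubits

lemma sum_fin_three_fin_two {M : Type*} [AddCommMonoid M] (f : (Fin 3 → Fin 2) → M) :
    ∑ u, f u = ∑ a : Fin 2, ∑ b : Fin 2, ∑ c : Fin 2, f ![a, b, c] := by
  rw [← Fintype.sum_bijective (fun p : Fin 2 × Fin 2 × Fin 2 => ![p.1, p.2.1, p.2.2])
    (by decide) _ f fun _ => rfl]
  simp only [Fintype.sum_prod_type]

lemma ptraceZero_of_forall_fin_two {i : Fin 3} {X : QMat 3}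
    (h : ∀ a₀ a₁ b₀ b₁ : Fin 2, X (i.insertNth 0 ![a₀, a₁]) (i.insertNth 0 ![b₀, b₁]) +
      X (i.insertNth 1 ![a₀, a₁]) (i.insertNth 1 ![b₀, b₁]) = 0) :
    ptraceZero i X := by
  rw [ptraceZero_iff_insertNth]
  intro a b
  rw [Fin.sum_univ_two, show a = ![a 0, a 1] by ext j; fin_cases j <;> rfl,
    show b = ![b 0, b 1] by ext j; fin_cases j <;> rfl]
  exact h _ _ _ _

lemma inv_sqrt_two_mul_self : (Real.sqrt 2 : ℂ)⁻¹ * (Real.sqrt 2 : ℂ)⁻¹ = 1 / 2 := by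
  rw [← mul_inv, ← Complex.ofReal_mul, Real.mul_self_sqrt zero_le_two]
  norm_num

lemma dotProduct_v000_v000 : star v000 ⬝ᵥ v000 = 1 := by
  simp [dotProduct, v000]

lemma dotProduct_vGHZ0_vGHZ0 : star vGHZ0 ⬝ᵥ vGHZ0 = 1 := by
  simp [dotProduct, sum_fin_three_fin_two, vGHZ0, Fin.sum_univ_two, inv_sqrt_two_mul_self]
  norm_num

lemma dotProduct_vTar_vTar : star vTar ⬝ᵥ vTar = 1 := by
  simp [dotProduct, sum_fin_three_fin_two, vTar, Fin.sum_univ_two, inv_sqrt_two_mul_self]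
  norm_num

lemma dotProduct_v000_vGHZ0 : star v000 ⬝ᵥ vGHZ0 = star vGHZ0 ⬝ᵥ v000 := by
  simp [dotProduct, sum_fin_three_fin_two, v000, vGHZ0, Fin.sum_univ_two]

lemma dotProduct_v000_vTar : star v000 ⬝ᵥ vTar = 0 := by
  simp [dotProduct, sum_fin_three_fin_two, v000, vTar, Fin.sum_univ_two]

lemma dotProduct_vGHZ0_vTar : star vGHZ0 ⬝ᵥ vTar = 0 := by
  simp [dotProduct, sum_fin_three_fin_two, vGHZ0, vTar, Fin.sum_univ_two]

lemma sum_hammingNorm_mul_diag_vGHZ0_sub_vTar :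
    ∑ u, ((hammingNorm u : ℝ) : ℂ) * (outer vGHZ0 - outer vTar) u u = -1 := by
  have h000 : hammingNorm (![0, 0, 0] : Fin 3 → Fin 2) = 0 := by decide
  have h001 : hammingNorm (![0, 0, 1] : Fin 3 → Fin 2) = 1 := by decide
  have h110 : hammingNorm (![1, 1, 0] : Fin 3 → Fin 2) = 2 := by decide
  have h111 : hammingNorm (![1, 1, 1] : Fin 3 → Fin 2) = 3 := by decide
  simp [sum_fin_three_fin_two, Fin.sum_univ_two, outer, vecMulVec_apply, vGHZ0, vTar, h000, h001,
    h110, h111, inv_sqrt_two_mul_self]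
  norm_num

lemma sum_hammingNorm_mul_diag_v000_sub_vTar :
    ∑ u, ((hammingNorm u : ℝ) : ℂ) * (outer v000 - outer vTar) u u = -2 := by
  have h000 : hammingNorm (![0, 0, 0] : Fin 3 → Fin 2) = 0 := by decide
  have h001 : hammingNorm (![0, 0, 1] : Fin 3 → Fin 2) = 1 := by decide
  have h111 : hammingNorm (![1, 1, 1] : Fin 3 → Fin 2) = 3 := by decide
  simp [sum_fin_three_fin_two, Fin.sum_univ_two, outer, vecMulVec_apply, v000, vTar, h000, h001,
    h111, inv_sqrt_two_mul_self]
  norm_num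

lemma ptraceZero_two_vGHZ0_sub_vTar : ptraceZero 2 (outer vGHZ0 - outer vTar) := by
  refine ptraceZero_of_forall_fin_two fun a₀ a₁ b₀ b₁ => ?_
  fin_cases a₀ <;> fin_cases a₁ <;> fin_cases b₀ <;> fin_cases b₁ <;>
    simp +decide [outer, vecMulVec_apply, vGHZ0, vTar]

noncomputable def state001 : QMat 3 := diagonal fun u => if u = ![0, 0, 1] then 1 else 0

noncomputable def state0mix1 : QMat 3 :=
  diagonal fun u => if u = ![0, 0, 1] ∨ u = ![0, 1, 1] then 1 / 2 else 0

lemma state001_isHermitian : state001.IsHermitian :=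
  isHermitian_diagonal_iff.2 fun u => by split_ifs <;> simp

lemma state0mix1_isHermitian : state0mix1.IsHermitian :=
  isHermitian_diagonal_iff.2 fun u => by split_ifs <;> simp

/-- Move `|000⟩` to `τ` one qubit at a time: flip qubit `2`, randomise qubit `1`, then entangle
qubit `0` with it. -/
lemma isEMDecomposition_v000_sub_vTar : IsEMDecomposition (outer v000 - outer vTar)
    ![state0mix1 - outer vTar, state001 - state0mix1, outer v000 - state001] := by
  refine ⟨fun i => ?_, fun i => ?_, ?_⟩
  · fin_cases i
    · exact state0mix1_isHermitian.sub (outer_isHermitian _)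
    · exact state001_isHermitian.sub state0mix1_isHermitian
    · exact (outer_isHermitian _).sub state001_isHermitian
  · refine ptraceZero_of_forall_fin_two fun a₀ a₁ b₀ b₁ => ?_
    fin_cases i <;> fin_cases a₀ <;> fin_cases a₁ <;> fin_cases b₀ <;> fin_cases b₁ <;>
      norm_num +decide [outer, vecMulVec_apply, v000, vTar, state001, state0mix1,
        inv_sqrt_two_mul_self]
  · simp only [Fin.sum_univ_three, Matrix.cons_val_zero, Matrix.cons_val_one, Matrix.cons_val_two,
      Matrix.head_cons, Matrix.tail_cons]
    abel

lemma emDist_vGHZ0_vTar : emDist (outer vGHZ0) (outer vTar) = 1 := by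
  have hdec : IsEMDecomposition (outer vGHZ0 - outer vTar) ![0, 0, outer vGHZ0 - outer vTar] := by
    refine ⟨fun i => ?_, fun i => ?_, by simp [Fin.sum_univ_three]⟩ <;> fin_cases i
    · exact isHermitian_zero
    · exact isHermitian_zero
    · exact (outer_isHermitian _).sub (outer_isHermitian _)
    · exact ptraceZero_zero _
    · exact ptraceZero_zero _
    · exact ptraceZero_two_vGHZ0_sub_vTar
  refine le_antisymm ?_ ?_
  · refine (emNorm_le_of_isEMDecomposition hdec).trans_eq ?_
    rw [Fin.sum_univ_three]
    simp [traceNorm_zero, traceNorm_outer_sub_outer dotProduct_vGHZ0_vGHZ0 dotProduct_vTar_vTar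
      dotProduct_vGHZ0_vTar]
  · have h := norm_sum_mul_diag_le_emNorm ⟨_, hdec⟩ abs_hammingNorm_sub_hammingNorm_le
    rwa [sum_hammingNorm_mul_diag_vGHZ0_sub_vTar, norm_neg, norm_one] at h

lemma two_le_emDist_v000_vTar : 2 ≤ emDist (outer v000) (outer vTar) := by
  have h := norm_sum_mul_diag_le_emNorm ⟨_, isEMDecomposition_v000_sub_vTar⟩
    abs_hammingNorm_sub_hammingNorm_le
  rwa [sum_hammingNorm_mul_diag_v000_sub_vTar, norm_neg, Complex.norm_two] at h

end ThreeQubits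

open Matrix in
/-- No unitarily invariant distance can register the local improvement from
`|000⟩` to `|GHZ₂⟩|0⟩` towards the target `|GHZ₂⟩|1⟩`: any distance `D` invariant
under joint unitary conjugation satisfies `D(ρ₀,τ) = D(ρ₁,τ)`, whereas the quantum
EM distance satisfies `D_EM(ρ₁,τ) = 1 < D_EM(ρ₀,τ)`. -/
theorem unitarily_invariant_vs_em (D : QMat 3 → QMat 3 → ℝ)
    (hD : ∀ U : Matrix (Fin 3 → Fin 2) (Fin 3 → Fin 2) ℂ,
      U ∈ Matrix.unitaryGroup (Fin 3 → Fin 2) ℂ →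
      ∀ ρ σ : QMat 3, D (U * ρ * Uᴴ) (U * σ * Uᴴ) = D ρ σ) :
    D (outer v000) (outer vTar) = D (outer vGHZ0) (outer vTar) ∧
    emDist (outer vGHZ0) (outer vTar) = 1 ∧
    emDist (outer vGHZ0) (outer vTar) < emDist (outer v000) (outer vTar) := by
  refine ⟨?_, emDist_vGHZ0_vTar, ?_⟩
  · exact apply_outer_eq_of_unitary_invariant hD
      (dotProduct_v000_v000.trans dotProduct_vGHZ0_vGHZ0.symm) dotProduct_v000_vGHZ0
      dotProduct_v000_vTar dotProduct_vGHZ0_vTar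
  · rw [emDist_vGHZ0_vTar]
    linarith [two_le_emDist_v000_vTar]
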